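/- arXiv:1801.04481 — 2 statements merged into one kernel-verified Lean document; each statement's English description precedes it below -/
import Mathlib

section
/- Let n ≥ 1, k ≥ 2 be integers and let F ∈ ℤ[x_1,…,x_n] be a polynomial of total degree d ≥ 2 such that for every prime p there exists (m_1,…,m_n) ∈ ℤ^n with p^k ∤ F(m_1,…,m_n). For B ≥ 3 set ξ_1 = ξ_1(B) = (log B)/(nk) and define N_1(B) to be the number of x ∈ ℤ^n with |x_i| ≤ B for all i such that p^k ∤ F(x) for every prime p ≤ ξ_1. Then as B → ∞, N_1(B)/(2⌊B⌋+1)^n converges to C_{F,k} = ∏_p (1 − ρ_F(p^k)/p^{kn}). -/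
open MvPolynomial Filter

/-- `ρ_F(m)`: the number of `a ∈ (ℤ/mℤ)^n` with `F(a) ≡ 0 (mod m)`. -/
noncomputable def rhoF {n : ℕ} (F : MvPolynomial (Fin n) ℤ) (m : ℕ) : ℕ :=
  Nat.card {a : Fin n → ZMod m // aeval a F = 0}

/-- `N_1(B)`: number of integer points in the box `|x_i| ≤ B` such that `F(x)` is not
divisible by `p^k` for any prime `p ≤ ξ₁(B) = (log B)/(nk)`. -/
noncomputable def NOneCount {n : ℕ} (F : MvPolynomial (Fin n) ℤ) (k : ℕ) (B : ℝ) : ℕ :=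
  Set.ncard {x : Fin n → ℤ | (∀ i, |(x i : ℝ)| ≤ B) ∧
    ∀ p : ℕ, p.Prime → (p : ℝ) ≤ Real.log B / (n * k) → ¬ ((p : ℤ) ^ k ∣ eval x F)}

/-!
For a finite set `S` of primes, whether `p ^ k ∤ F x` for all `p ∈ S` depends only on `x` modulo
`M = ∏_{p ∈ S} p ^ k`; by the Chinese remainder theorem the admissible classes make up the
proportion `∏_{p ∈ S} (1 - ρ_F(p^k) / p^(kn))` of `(ℤ/Mℤ)^n`, and each class meets the box
`[-b, b]^n` in `((2b+1)/M)^n (1 + o(1))` points. Sieving by more primes only lowers the count,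
so the normalised count is eventually below every partial product, hence below any `c > C_{F,k}`.
If `0 < C_{F,k}`, then `1 - t ≤ exp (-t)` shows that the local densities `ρ_F(p^k) / p^(kn)` are
summable. Past a finite set `T` of primes with small tail, each prime `p ≤ ξ₁(B)` removes at most
`2^n ρ_F(p^k)/p^(kn) (2⌊B⌋+1)^n` further points, because `p ^ k ≤ B` for such `p`; this gives the
lower bound.
-/

open Finset Function Topology

namespace PowerFreeSieve

theorem abs_card_filter_Icc_intCast_eq_sub_le {m : ℕ} [NeZero m] {b : ℤ} (hb : 0 ≤ b)
    (r : ZMod m) : |(#{t ∈ Icc (-b) b | ((t : ℤ) : ZMod m) = r} : ℝ) - (2 * b + 1) / m| ≤ 1 := by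
  have hfilter : {t ∈ Icc (-b) b | ((t : ℤ) : ZMod m) = r}
      = {t ∈ Ioc (-b - 1) b | t ≡ (r.val : ℤ) [ZMOD m]} := by
    rw [show Icc (-b) b = Ioc (-b - 1) b by ext; simp only [mem_Icc, mem_Ioc]; omega]
    refine filter_congr fun t _ => ?_
    rw [← ZMod.intCast_eq_intCast_iff, Int.cast_natCast, ZMod.natCast_zmod_val]
  set X : ℚ := (b - (r.val : ℤ)) / (m : ℤ)
  set Y : ℚ := ((-b - 1 : ℤ) - (r.val : ℤ)) / (m : ℤ)
  have hXY : X - Y = (2 * b + 1) / m := by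
    simp only [X, Y]; push_cast; ring
  have hYX : Y ≤ X := by
    have : (0 : ℚ) ≤ (2 * b + 1) / m := by positivity
    linarith
  have hcard := Int.Ioc_filter_modEq_card (-b - 1) b (r := m)
    (Int.natCast_pos.2 (NeZero.pos m)) (r.val : ℤ)
  rw [max_eq_left (sub_nonneg.2 (Int.floor_mono hYX)), ← hfilter] at hcard
  have hfloor : |((⌊X⌋ - ⌊Y⌋ : ℤ) : ℚ) - (X - Y)| ≤ 1 := by
    rw [abs_le]; push_cast
    constructor <;> linarith [Int.floor_le X, Int.sub_one_lt_floor X,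
      Int.floor_le Y, Int.sub_one_lt_floor Y]
  rw [← hcard, hXY] at hfloor
  exact_mod_cast hfloor

theorem tendsto_two_mul_intCast_add_one_atTop :
    Tendsto (fun b : ℤ => 2 * (b : ℝ) + 1) atTop atTop :=
  tendsto_atTop_add_const_right _ 1 (tendsto_intCast_atTop_atTop.const_mul_atTop two_pos)

theorem tendsto_card_filter_Icc_intCast_eq_div (m : ℕ) [NeZero m] (r : ZMod m) :
    Tendsto (fun b : ℤ => (#{t ∈ Icc (-b) b | ((t : ℤ) : ZMod m) = r} : ℝ) / (2 * b + 1))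
      atTop (𝓝 (1 / m)) := by
  refine tendsto_iff_norm_sub_tendsto_zero.2 <| squeeze_zero' (.of_forall fun _ => norm_nonneg _)
    ?_ (tendsto_inv_atTop_zero.comp tendsto_two_mul_intCast_add_one_atTop)
  filter_upwards [eventually_ge_atTop 0] with b hb
  have hL : (0 : ℝ) < 2 * b + 1 := by positivity
  have hsub : (#{t ∈ Icc (-b) b | ((t : ℤ) : ZMod m) = r} : ℝ) / (2 * b + 1) - 1 / m
      = ((#{t ∈ Icc (-b) b | ((t : ℤ) : ZMod m) = r} : ℝ) - (2 * b + 1) / m) / (2 * b + 1) := by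
    field_simp
  rw [Function.comp_apply, Real.norm_eq_abs, hsub, abs_div, abs_of_pos hL, ← one_div]
  exact div_le_div_of_nonneg_right (abs_card_filter_Icc_intCast_eq_sub_le hb r) hL.le

variable {n : ℕ}

noncomputable def box (n : ℕ) (b : ℤ) : Finset (Fin n → ℤ) :=
  Fintype.piFinset fun _ => Icc (-b) b

theorem card_box_filter_mem (m : ℕ) (A : Finset (Fin n → ZMod m)) (b : ℤ) :
    #{x ∈ box n b | (fun i => (x i : ZMod m)) ∈ A}
      = ∑ a ∈ A, ∏ i, #{t ∈ Icc (-b) b | ((t : ℤ) : ZMod m) = a i} := by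
  rw [card_eq_sum_card_fiberwise (s := {x ∈ box n b | (fun i => (x i : ZMod m)) ∈ A}) (t := A)
    (f := fun x i => (x i : ZMod m)) fun x hx => (mem_filter.1 hx).2]
  refine sum_congr rfl fun a ha => ?_
  rw [← Fintype.card_piFinset]
  congr 1
  ext x
  simp only [box, mem_filter, Fintype.mem_piFinset, funext_iff, forall_and]
  constructor
  · rintro ⟨⟨hbox, -⟩, hres⟩
    exact ⟨hbox, hres⟩
  · rintro ⟨hbox, hres⟩
    exact ⟨⟨hbox, by rwa [funext hres]⟩, hres⟩

theorem card_box_filter_mem_le {m : ℕ} [NeZero m] {b : ℤ} (hb : 0 ≤ b)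
    (A : Finset (Fin n → ZMod m)) :
    (#{x ∈ box n b | (fun i => (x i : ZMod m)) ∈ A} : ℝ) ≤ #A * ((2 * b + 1) / m + 1) ^ n := by
  rw [card_box_filter_mem, Nat.cast_sum, ← nsmul_eq_mul]
  refine sum_le_card_nsmul _ _ _ fun a _ => ?_
  rw [Nat.cast_prod, ← Fin.prod_const]
  refine prod_le_prod (fun _ _ => by positivity) fun i _ => ?_
  linarith [(abs_le.1 (abs_card_filter_Icc_intCast_eq_sub_le hb (a i))).2]

theorem tendsto_card_box_filter_mem_div (m : ℕ) [NeZero m] (A : Finset (Fin n → ZMod m)) :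
    Tendsto (fun b : ℤ => (#{x ∈ box n b | (fun i => (x i : ZMod m)) ∈ A} : ℝ) / (2 * b + 1) ^ n)
      atTop (𝓝 (#A / m ^ n)) := by
  have key (b : ℤ) : (#{x ∈ box n b | (fun i => (x i : ZMod m)) ∈ A} : ℝ) / (2 * b + 1) ^ n
      = ∑ a ∈ A, ∏ i, (#{t ∈ Icc (-b) b | ((t : ℤ) : ZMod m) = a i} : ℝ) / (2 * b + 1) := by
    rw [card_box_filter_mem, Nat.cast_sum, sum_div]
    refine sum_congr rfl fun a _ => ?_
    rw [Nat.cast_prod, prod_div_distrib, Fin.prod_const]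
  have := tendsto_finsetSum A fun a _ => tendsto_finsetProd univ fun i _ =>
    tendsto_card_filter_Icc_intCast_eq_div m (a i)
  rw [prod_const, card_univ, Fintype.card_fin, sum_const, nsmul_eq_mul, div_pow, one_pow,
    ← div_eq_mul_one_div] at this
  exact this.congr fun b => (key b).symm

theorem aeval_intCast_eq_zero_iff_dvd {σ : Type*} (F : MvPolynomial σ ℤ) (N : ℕ) (x : σ → ℤ) :
    aeval (fun i => (x i : ZMod N)) F = 0 ↔ (N : ℤ) ∣ eval x F := by
  rw [← ZMod.intCast_zmod_eq_zero_iff_dvd]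
  exact Eq.congr_left (aeval_algebraMap_apply (B := ZMod N) x F)

theorem card_box_filter_dvd_le (F : MvPolynomial (Fin n) ℤ) {N : ℕ} [NeZero N] {b : ℤ}
    (hb : 0 ≤ b) :
    (#{x ∈ box n b | (N : ℤ) ∣ eval x F} : ℝ) ≤ rhoF F N * ((2 * b + 1) / N + 1) ^ n := by
  classical
  have hroots : #{a : Fin n → ZMod N | aeval a F = 0} = rhoF F N := by
    rw [rhoF, Nat.card_eq_fintype_card, Fintype.card_subtype]
  simp_rw [← aeval_intCast_eq_zero_iff_dvd, ← hroots]
  convert card_box_filter_mem_le hb {a : Fin n → ZMod N | aeval a F = 0} using 3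
  simp

theorem card_forall_comp_equiv_pi {κ ι R : Type*} {Rᵢ : ι → Type*} [Fintype ι]
    (e : R ≃ ∀ i, Rᵢ i) (P : ∀ i, (κ → Rᵢ i) → Prop) :
    Nat.card {a : κ → R // ∀ i, P i fun j => e (a j) i} = ∏ i, Nat.card {y // P i y} := by
  rw [← Nat.card_pi]
  exact Nat.card_congr <| (Equiv.subtypeEquiv ((Equiv.piCongrRight fun _ => e).trans
    (Equiv.piComm _)) fun _ => Iff.rfl).trans Equiv.subtypePiEquivPi

theorem pairwise_coprime_prime_pow (k : ℕ) (S : Finset Nat.Primes) :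
    Pairwise (Nat.Coprime on fun p : S => (p : ℕ) ^ k) := fun p q hpq =>
  Nat.Coprime.pow k k <| (Nat.coprime_primes p.1.2 q.1.2).2 fun h =>
    hpq (Subtype.ext (Subtype.ext h))

instance (k : ℕ) (p : Nat.Primes) : NeZero ((p : ℕ) ^ k) := ⟨pow_ne_zero k p.2.ne_zero⟩

instance (k : ℕ) (S : Finset Nat.Primes) : NeZero (∏ p : S, (p : ℕ) ^ k) :=
  ⟨prod_ne_zero_iff.2 fun _ _ => NeZero.ne _⟩

open Classical in
noncomputable def sieveResidues (F : MvPolynomial (Fin n) ℤ) (k : ℕ) (S : Finset Nat.Primes) :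
    Finset (Fin n → ZMod (∏ p : S, (p : ℕ) ^ k)) :=
  {a | ∀ p : S, aeval (fun j => ((a j).cast : ZMod ((p : ℕ) ^ k))) F ≠ 0}

theorem card_sieveResidues (F : MvPolynomial (Fin n) ℤ) (k : ℕ) (S : Finset Nat.Primes) :
    #(sieveResidues F k S)
      = ∏ p ∈ S, Nat.card {y : Fin n → ZMod ((p : ℕ) ^ k) // aeval y F ≠ 0} := by
  classical
  let e := ZMod.prodEquivPi _ (pairwise_coprime_prime_pow k S)
  calc #(sieveResidues F k S)
      = Nat.card {a : Fin n → ZMod (∏ p : S, (p : ℕ) ^ k) //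
          ∀ p : S, aeval (fun j => e (a j) p) F ≠ 0} := by
        simp only [sieveResidues, ← Fintype.card_subtype, ← Nat.card_eq_fintype_card, e,
          ZMod.prodEquivPi_apply, ZMod.castHom_apply]
    _ = ∏ p : S, Nat.card {y : Fin n → ZMod ((p : ℕ) ^ k) // aeval y F ≠ 0} :=
        card_forall_comp_equiv_pi e.toEquiv fun p y => aeval y F ≠ 0
    _ = ∏ p ∈ S, Nat.card {y : Fin n → ZMod ((p : ℕ) ^ k) // aeval y F ≠ 0} :=
        prod_coe_sort S fun p => Nat.card {y : Fin n → ZMod ((p : ℕ) ^ k) // aeval y F ≠ 0}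

theorem mem_sieveResidues_intCast (F : MvPolynomial (Fin n) ℤ) (k : ℕ) (S : Finset Nat.Primes)
    (x : Fin n → ℤ) :
    (fun j => (x j : ZMod (∏ p : S, (p : ℕ) ^ k))) ∈ sieveResidues F k S
      ↔ ∀ p ∈ S, ¬ ((p : ℕ) : ℤ) ^ k ∣ eval x F := by
  classical
  have hcast (p : Nat.Primes) (hp : p ∈ S) (j : Fin n) :
      ((x j : ZMod (∏ p : S, (p : ℕ) ^ k)).cast : ZMod ((p : ℕ) ^ k)) = x j :=
    ZMod.cast_intCast (dvd_prod_of_mem (fun q : S => (q : ℕ) ^ k) (mem_univ (⟨p, hp⟩ : S))) (x j)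
  simp only [sieveResidues, mem_filter, mem_univ, true_and, Subtype.forall]
  refine forall₂_congr fun p hp => ?_
  rw [funext (hcast p hp), ne_eq, aeval_intCast_eq_zero_iff_dvd, Nat.cast_pow]

noncomputable def localDensity (F : MvPolynomial (Fin n) ℤ) (k : ℕ) (p : Nat.Primes) : ℝ :=
  (rhoF F ((p : ℕ) ^ k) : ℝ) / ((p : ℕ) : ℝ) ^ (k * n)

theorem one_sub_localDensity (F : MvPolynomial (Fin n) ℤ) (k : ℕ) (p : Nat.Primes) :
    1 - localDensity F k p
      = Nat.card {y : Fin n → ZMod ((p : ℕ) ^ k) // aeval y F ≠ 0} / (((p : ℕ) ^ k) ^ n : ℕ) := by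
  classical
  have hcompl : Nat.card {y : Fin n → ZMod ((p : ℕ) ^ k) // aeval y F ≠ 0}
      = ((p : ℕ) ^ k) ^ n - rhoF F ((p : ℕ) ^ k) := by
    simp only [rhoF, Nat.card_eq_fintype_card, ne_eq, Fintype.card_subtype_compl,
      Fintype.card_fun, ZMod.card, Fintype.card_fin]
  have hle : rhoF F ((p : ℕ) ^ k) ≤ ((p : ℕ) ^ k) ^ n := by
    simpa only [rhoF, Nat.card_eq_fintype_card, Fintype.card_fun, ZMod.card, Fintype.card_fin]
      using Fintype.card_subtype_le (fun y : Fin n → ZMod ((p : ℕ) ^ k) => aeval y F = 0)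
  have hpos : (0 : ℝ) < (((p : ℕ) ^ k) ^ n : ℕ) := by have := p.2.pos; positivity
  rw [hcompl, Nat.cast_sub hle, sub_div, div_self hpos.ne', localDensity, ← pow_mul,
    Nat.cast_pow]

theorem localDensity_nonneg (F : MvPolynomial (Fin n) ℤ) (k : ℕ) (p : Nat.Primes) :
    0 ≤ localDensity F k p := by
  unfold localDensity; positivity

theorem localDensity_le_one (F : MvPolynomial (Fin n) ℤ) (k : ℕ) (p : Nat.Primes) :
    localDensity F k p ≤ 1 := by
  have h : 0 ≤ 1 - localDensity F k p := by rw [one_sub_localDensity]; positivity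
  linarith

open Classical in
noncomputable def sieveCount (F : MvPolynomial (Fin n) ℤ) (k : ℕ) (S : Finset Nat.Primes)
    (b : ℤ) : ℕ :=
  #{x ∈ box n b | ∀ p ∈ S, ¬ ((p : ℕ) : ℤ) ^ k ∣ eval x F}

theorem tendsto_sieveCount_div (F : MvPolynomial (Fin n) ℤ) (k : ℕ) (S : Finset Nat.Primes) :
    Tendsto (fun b : ℤ => (sieveCount F k S b : ℝ) / (2 * b + 1) ^ n) atTop
      (𝓝 (∏ p ∈ S, (1 - localDensity F k p))) := by
  classical
  have hcount (b : ℤ) : sieveCount F k S b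
      = #{x ∈ box n b | (fun j => (x j : ZMod (∏ p : S, (p : ℕ) ^ k))) ∈ sieveResidues F k S} := by
    rw [sieveCount]
    congr 1
    exact filter_congr fun x _ => (mem_sieveResidues_intCast F k S x).symm
  have hlim : (#(sieveResidues F k S) : ℝ) / ((∏ p : S, (p : ℕ) ^ k : ℕ) : ℝ) ^ n
      = ∏ p ∈ S, (1 - localDensity F k p) := by
    rw [card_sieveResidues, ← Nat.cast_pow, ← prod_pow, prod_coe_sort S fun p => ((p : ℕ) ^ k) ^ n,
      Nat.cast_prod, Nat.cast_prod, ← prod_div_distrib]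
    exact prod_congr rfl fun p _ => (one_sub_localDensity F k p).symm
  simp_rw [hcount, ← hlim]
  exact tendsto_card_box_filter_mem_div _ _

theorem card_box_filter_pow_dvd_le (F : MvPolynomial (Fin n) ℤ) (k : ℕ) (p : Nat.Primes)
    {b : ℤ} (hb : 0 ≤ b) (hp : ((p : ℕ) : ℝ) ^ k ≤ 2 * b + 1) :
    (#{x ∈ box n b | ((p : ℕ) : ℤ) ^ k ∣ eval x F} : ℝ)
      ≤ 2 ^ n * localDensity F k p * (2 * b + 1) ^ n := by
  have hq : (0 : ℝ) < ((p : ℕ) : ℝ) ^ k := by have := p.2.pos; positivity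
  have h := card_box_filter_dvd_le F (N := (p : ℕ) ^ k) hb
  push_cast at h
  calc _ ≤ (rhoF F ((p : ℕ) ^ k) : ℝ) * ((2 * b + 1) / ((p : ℕ) : ℝ) ^ k + 1) ^ n := h
    _ ≤ (rhoF F ((p : ℕ) ^ k) : ℝ) * (2 * ((2 * b + 1) / ((p : ℕ) : ℝ) ^ k)) ^ n := by
      gcongr
      linarith [(one_le_div hq).2 hp]
    _ = 2 ^ n * localDensity F k p * (2 * b + 1) ^ n := by
      rw [localDensity, mul_pow, div_pow, ← pow_mul]
      field_simp

section InfiniteProduct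

variable {ι : Type*} {f : ι → ℝ}

theorem hasProd_iInf_of_nonneg_of_le_one (h0 : ∀ i, 0 ≤ f i) (h1 : ∀ i, f i ≤ 1) :
    HasProd f (⨅ s : Finset ι, ∏ i ∈ s, f i) :=
  tendsto_atTop_ciInf (prod_anti_set_of_le_one h0 h1)
    ⟨0, Set.forall_mem_range.2 fun _ => prod_nonneg fun i _ => h0 i⟩

theorem tprod_le_prod_of_nonneg_of_le_one (h0 : ∀ i, 0 ≤ f i) (h1 : ∀ i, f i ≤ 1)
    (s : Finset ι) : ∏' i, f i ≤ ∏ i ∈ s, f i :=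
  (prod_anti_set_of_le_one h0 h1).le_of_tendsto
    (hasProd_iInf_of_nonneg_of_le_one h0 h1).multipliable.hasProd s

theorem summable_of_tprod_one_sub_pos (h0 : ∀ i, 0 ≤ f i) (h1 : ∀ i, f i ≤ 1)
    (hpos : 0 < ∏' i, (1 - f i)) : Summable f := by
  refine summable_of_sum_le (c := -Real.log (∏' i, (1 - f i))) h0 fun s => ?_
  have hprod : ∏' i, (1 - f i) ≤ Real.exp (-∑ i ∈ s, f i) :=
    calc ∏' i, (1 - f i) ≤ ∏ i ∈ s, (1 - f i) :=
          tprod_le_prod_of_nonneg_of_le_one (fun i => sub_nonneg.2 (h1 i))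
            (fun i => sub_le_self 1 (h0 i)) s
      _ ≤ ∏ i ∈ s, Real.exp (-f i) :=
          prod_le_prod (fun i _ => sub_nonneg.2 (h1 i))
            fun i _ => by linarith [Real.add_one_le_exp (-f i)]
      _ = Real.exp (-∑ i ∈ s, f i) := by rw [← Real.exp_sum, sum_neg_distrib]
  linarith [(Real.log_le_iff_le_exp hpos).2 hprod]

end InfiniteProduct

noncomputable def primesUpTo (x : ℝ) : Finset Nat.Primes := (Iic ⌊x⌋₊).subtype Nat.Prime

theorem mem_primesUpTo {x : ℝ} {p : Nat.Primes} : p ∈ primesUpTo x ↔ ((p : ℕ) : ℝ) ≤ x :=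
  mem_subtype.trans (mem_Iic.trans (Nat.le_floor_iff' p.2.ne_zero))

theorem abs_intCast_le_iff_mem_Icc_floor (z : ℤ) (B : ℝ) : |(z : ℝ)| ≤ B ↔ z ∈ Icc (-⌊B⌋) ⌊B⌋ := by
  rw [mem_Icc, neg_le, Int.le_floor, Int.le_floor, Int.cast_neg, neg_le, abs_le]

theorem NOneCount_eq_sieveCount (F : MvPolynomial (Fin n) ℤ) (k : ℕ) (B : ℝ) :
    NOneCount F k B = sieveCount F k (primesUpTo (Real.log B / (n * k))) ⌊B⌋ := by
  classical
  rw [NOneCount, sieveCount, ← Set.ncard_coe_finset]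
  congr 1
  ext x
  simp only [Set.mem_ofPred_eq, coe_filter, box, Fintype.mem_piFinset, mem_primesUpTo,
    abs_intCast_le_iff_mem_Icc_floor]
  exact and_congr_right fun _ => ⟨fun h p => h p p.2, fun h p hp => h ⟨p, hp⟩⟩

theorem pow_le_of_mul_le_log {x B : ℝ} (k : ℕ) (hx : 0 ≤ x) (hB : 0 < B)
    (h : k * x ≤ Real.log B) : x ^ k ≤ B :=
  calc x ^ k ≤ Real.exp x ^ k := pow_le_pow_left₀ hx (by linarith [Real.add_one_le_exp x]) k
    _ = Real.exp (k * x) := by rw [← Real.exp_nat_mul]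
    _ ≤ B := (Real.le_log_iff_exp_le hB).1 h

-- This is what the cutoff `ξ₁(B) = log B / (nk)` is for: every sieving modulus `p ^ k` fits in
-- the box, so the count of points with `p ^ k ∣ F x` is governed by `ρ_F(p^k)`.
theorem pow_le_two_mul_floor_add_one {n k : ℕ} (hn : 1 ≤ n) (hk : 0 < k) {B : ℝ} (hB : 1 ≤ B)
    {p : Nat.Primes} (hp : p ∈ primesUpTo (Real.log B / (n * k))) :
    ((p : ℕ) : ℝ) ^ k ≤ 2 * ⌊B⌋ + 1 := by
  have hnk : (0 : ℝ) < n * k := by positivity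
  have hp0 : (0 : ℝ) ≤ (p : ℕ) := Nat.cast_nonneg _
  have hlog : k * ((p : ℕ) : ℝ) ≤ Real.log B := by
    have h := (le_div_iff₀ hnk).1 (mem_primesUpTo.1 hp)
    have : (1 : ℝ) ≤ n := by exact_mod_cast hn
    nlinarith [mul_nonneg (sub_nonneg.2 this) (mul_nonneg (Nat.cast_nonneg k) hp0)]
  have hfloor : (0 : ℝ) ≤ ⌊B⌋ := by exact_mod_cast Int.floor_nonneg.2 (by linarith)
  linarith [pow_le_of_mul_le_log k hp0 (by linarith) hlog, Int.lt_floor_add_one B]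

theorem sieveCount_anti (F : MvPolynomial (Fin n) ℤ) (k : ℕ) {S T : Finset Nat.Primes}
    (hST : S ⊆ T) (b : ℤ) : sieveCount F k T b ≤ sieveCount F k S b := by
  classical
  exact card_le_card (monotone_filter_right _ fun x _ hx p hp => hx p (hST hp))

theorem sieveCount_le_add_sum (F : MvPolynomial (Fin n) ℤ) (k : ℕ) (S T : Finset Nat.Primes)
    (b : ℤ) :
    sieveCount F k T b
      ≤ sieveCount F k S b + ∑ p ∈ S \ T, #{x ∈ box n b | ((p : ℕ) : ℤ) ^ k ∣ eval x F} := by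
  classical
  rw [sieveCount, sieveCount]
  refine (card_le_card fun x hx => ?_).trans ((card_union_le _ _).trans
    (Nat.add_le_add_left card_biUnion_le _))
  simp only [mem_filter, mem_union, mem_biUnion] at hx ⊢
  by_cases hS : ∃ p ∈ S, ((p : ℕ) : ℤ) ^ k ∣ eval x F
  · obtain ⟨p, hpS, hdvd⟩ := hS
    exact Or.inr ⟨p, mem_sdiff.2 ⟨hpS, fun hpT => hx.2 p hpT hdvd⟩, hx.1, hdvd⟩
  · exact Or.inl ⟨hx.1, fun p hp hdvd => hS ⟨p, hp, hdvd⟩⟩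

theorem multipliable_one_sub_localDensity (F : MvPolynomial (Fin n) ℤ) (k : ℕ) :
    Multipliable fun p => 1 - localDensity F k p :=
  (hasProd_iInf_of_nonneg_of_le_one (fun p => sub_nonneg.2 (localDensity_le_one F k p))
    fun p => sub_le_self 1 (localDensity_nonneg F k p)).multipliable

theorem tendsto_sieveCount_floor_div (F : MvPolynomial (Fin n) ℤ) (k : ℕ)
    (S : Finset Nat.Primes) :
    Tendsto (fun B : ℝ => (sieveCount F k S ⌊B⌋ : ℝ) / (2 * ⌊B⌋ + 1) ^ n) atTop
      (𝓝 (∏ p ∈ S, (1 - localDensity F k p))) :=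
  (tendsto_sieveCount_div F k S).comp tendsto_floor_atTop

theorem eventually_NOneCount_div_lt (hn : 1 ≤ n) {k : ℕ} (hk : 0 < k)
    (F : MvPolynomial (Fin n) ℤ) {c : ℝ} (hc : ∏' p, (1 - localDensity F k p) < c) :
    ∀ᶠ B in atTop, (NOneCount F k B : ℝ) / (2 * ⌊B⌋ + 1) ^ n < c := by
  obtain ⟨S, hS⟩ :=
    ((multipliable_one_sub_localDensity F k).hasProd.eventually (eventually_lt_nhds hc)).exists
  have hξ : Tendsto (fun B => Real.log B / (n * k)) atTop atTop :=
    Real.tendsto_log_atTop.atTop_div_const (by positivity)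
  have hsub : ∀ᶠ B in atTop, S ⊆ primesUpTo (Real.log B / (n * k)) := by
    filter_upwards [(eventually_all_finset S).2 fun p _ => hξ.eventually_ge_atTop ((p : ℕ) : ℝ)]
      with B hB p hp using mem_primesUpTo.2 (hB p hp)
  filter_upwards [(tendsto_sieveCount_floor_div F k S).eventually (eventually_lt_nhds hS), hsub,
    eventually_ge_atTop 0] with B hB hSB hB0
  have hL : (0 : ℝ) ≤ 2 * ⌊B⌋ + 1 := by
    have : (0 : ℝ) ≤ ⌊B⌋ := by exact_mod_cast Int.floor_nonneg.2 hB0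
    linarith
  rw [NOneCount_eq_sieveCount]
  refine lt_of_le_of_lt ?_ hB
  gcongr
  exact sieveCount_anti F k hSB _

theorem sieveCount_le_NOneCount_add (hn : 1 ≤ n) {k : ℕ} (hk : 0 < k)
    (F : MvPolynomial (Fin n) ℤ) {T : Finset Nat.Primes} {ε : ℝ}
    (hT : ∀ V, Disjoint V T → ∑ p ∈ V, localDensity F k p < ε) {B : ℝ} (hB : 1 ≤ B) :
    (sieveCount F k T ⌊B⌋ : ℝ) ≤ NOneCount F k B + 2 ^ n * ε * (2 * ⌊B⌋ + 1) ^ n := by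
  set P := primesUpTo (Real.log B / (n * k))
  have hb : 0 ≤ ⌊B⌋ := Int.floor_nonneg.2 (by linarith)
  have htail : ∑ p ∈ P \ T, (#{x ∈ box n ⌊B⌋ | ((p : ℕ) : ℤ) ^ k ∣ eval x F} : ℝ)
      ≤ 2 ^ n * ε * (2 * ⌊B⌋ + 1) ^ n :=
    calc _ ≤ ∑ p ∈ P \ T, 2 ^ n * localDensity F k p * (2 * ⌊B⌋ + 1) ^ n :=
          sum_le_sum fun p hp => card_box_filter_pow_dvd_le F k p hb
            (pow_le_two_mul_floor_add_one hn hk hB (mem_sdiff.1 hp).1)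
      _ = 2 ^ n * (∑ p ∈ P \ T, localDensity F k p) * (2 * ⌊B⌋ + 1) ^ n := by
          rw [mul_sum, sum_mul]
      _ ≤ 2 ^ n * ε * (2 * ⌊B⌋ + 1) ^ n := by
          gcongr
          exact (hT _ sdiff_disjoint).le
  have hsieve := (Nat.cast_le (α := ℝ)).2 (sieveCount_le_add_sum F k P T ⌊B⌋)
  push_cast at hsieve
  rw [NOneCount_eq_sieveCount]
  linarith

theorem eventually_lt_NOneCount_div (hn : 1 ≤ n) {k : ℕ} (hk : 0 < k)
    (F : MvPolynomial (Fin n) ℤ) {c : ℝ} (hc : c < ∏' p, (1 - localDensity F k p)) :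
    ∀ᶠ B in atTop, c < (NOneCount F k B : ℝ) / (2 * ⌊B⌋ + 1) ^ n := by
  set C := ∏' p, (1 - localDensity F k p)
  rcases lt_or_ge c 0 with hc0 | hc0
  · filter_upwards [eventually_ge_atTop 0] with B hB0
    have : (0 : ℝ) ≤ ⌊B⌋ := by exact_mod_cast Int.floor_nonneg.2 hB0
    exact hc0.trans_le (by positivity)
  have hsum : Summable (localDensity F k) :=
    summable_of_tprod_one_sub_pos (localDensity_nonneg F k) (localDensity_le_one F k)
      (hc0.trans_lt hc)
  -- the tail of the sieve and the error in the partial product each cost `2 ^ n * ε`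
  set ε := (C - c) / 2 ^ (n + 1)
  have hε : 0 < ε := div_pos (sub_pos.2 hc) (by positivity)
  obtain ⟨T, hT⟩ := summable_iff_vanishing.1 hsum (Set.Iio ε) (Iio_mem_nhds hε)
  have hCT : C - 2 ^ n * ε < ∏ p ∈ T, (1 - localDensity F k p) :=
    (sub_lt_self C (by positivity)).trans_le (tprod_le_prod_of_nonneg_of_le_one
      (fun p => sub_nonneg.2 (localDensity_le_one F k p))
      (fun p => sub_le_self 1 (localDensity_nonneg F k p)) T)
  filter_upwards [(tendsto_sieveCount_floor_div F k T).eventually (eventually_gt_nhds hCT),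
    eventually_ge_atTop 1] with B hB hB1
  have hL : (0 : ℝ) < (2 * ⌊B⌋ + 1) ^ n := by
    have : (0 : ℝ) ≤ ⌊B⌋ := by exact_mod_cast Int.floor_nonneg.2 (by linarith)
    positivity
  have hcount := sieveCount_le_NOneCount_add hn hk F hT hB1
  have hcε : c = C - 2 ^ n * ε - 2 ^ n * ε := by
    simp only [ε, pow_succ]; field_simp; ring
  rw [lt_div_iff₀ hL] at hB ⊢
  rw [hcε]
  linarith

end PowerFreeSieve

theorem N1_asymptotic_general (n k : ℕ) (hn : 1 ≤ n) (hk : 2 ≤ k)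
    (F : MvPolynomial (Fin n) ℤ) :
    Tendsto (fun B : ℝ => (NOneCount F k B : ℝ) / (2 * (⌊B⌋ : ℝ) + 1) ^ n) atTop
      (nhds (∏' p : Nat.Primes,
        ((1 : ℝ) - (rhoF F ((p : ℕ) ^ k) : ℝ) / ((p : ℕ) : ℝ) ^ (k * n)))) :=
  tendsto_order.2
    ⟨fun _ hc => PowerFreeSieve.eventually_lt_NOneCount_div hn (by omega) F hc,
      fun _ hc => PowerFreeSieve.eventually_NOneCount_div_lt hn (by omega) F hc⟩

theorem N1_asymptotic (n k d : ℕ) (hn : 1 ≤ n) (hk : 2 ≤ k) (hd : 2 ≤ d)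
    (F : MvPolynomial (Fin n) ℤ) (hdeg : F.totalDegree = d)
    (hF : ∀ p : ℕ, p.Prime → ∃ m : Fin n → ℤ, ¬ ((p : ℤ) ^ k ∣ eval m F)) :
    Tendsto (fun B : ℝ => (NOneCount F k B : ℝ) / (2 * (⌊B⌋ : ℝ) + 1) ^ n) atTop
      (nhds (∏' p : Nat.Primes,
        ((1 : ℝ) - (rhoF F ((p : ℕ) ^ k) : ℝ) / ((p : ℕ) : ℝ) ^ (k * n)))) :=
  N1_asymptotic_general n k hn hk F
end

section
/- Let n ≥ 1 and let F ∈ ℤ[x_1,…,x_n] be a polynomial whose degree in the variable x_1 is at most d. Then for every prime p and every real B ≥ 1, the number of x ∈ ℤ^n with |x_i| ≤ B for all i such that p² | F(x) and p ∤ (∂F/∂x_1)(x) is at most d (2B+1)^{n−1} (2B/p² + 1). -/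
/-!
Fix all coordinates but the first: `F` becomes a polynomial `g ∈ ℤ[t]` of degree at most `d`, and
it suffices to count the `t ∈ [-B, B]` with `p² ∣ g(t)` and `p ∤ g'(t)`. Such `t` reduce mod `p` to
roots of `g mod p`, a nonzero polynomial since `g'(t) ≢ 0`, so they fall into at most `d` classes
mod `p`. By Hensel's lemma two of them in the same class mod `p` agree mod `p²`, and an interval of
length `2B` meets a class mod `p²` in at most `2B/p² + 1` integers.
-/

open MvPolynomial

section

open Finset

theorem Int.card_le_of_forall_dvd_sub {q a b : ℤ} (hq : 0 < q) (hab : a ≤ b) {s : Finset ℤ}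
    (hs : s ⊆ Icc a b) (hdvd : ∀ t ∈ s, ∀ u ∈ s, q ∣ t - u) :
    (#s : ℝ) ≤ (b - a) / q + 1 := by
  rcases s.eq_empty_or_nonempty with rfl | hne
  · have : (0 : ℝ) ≤ (b - a) / q := div_nonneg (by simpa using hab) (by exact_mod_cast hq.le)
    simp only [card_empty, Nat.cast_zero]
    linarith
  set t₀ := s.min' hne
  have ht₀ : t₀ ∈ s := s.min'_mem hne
  set K := (b - a) / q
  have hK₀ : 0 ≤ K := Int.ediv_nonneg (by omega) hq.le
  have hcard : #s ≤ #(Icc 0 K) := by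
    refine card_le_card_of_injOn (fun t => (t - t₀) / q) (fun t ht => ?_)
      (fun t ht u hu htu => ?_)
    · have := s.min'_le t ht
      have := (mem_Icc.mp (hs ht)).2
      have := (mem_Icc.mp (hs ht₀)).1
      exact mem_Icc.mpr ⟨Int.ediv_nonneg (by omega) hq.le, Int.ediv_le_ediv hq (by omega)⟩
    · have := Int.ediv_mul_cancel (hdvd t ht t₀ ht₀)
      have := Int.ediv_mul_cancel (hdvd u hu t₀ ht₀)
      simp only at htu
      grind
  have hKq : (K : ℝ) ≤ (b - a) / q := by
    rw [le_div_iff₀ (by exact_mod_cast hq)]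
    exact_mod_cast Int.ediv_mul_le (b - a) hq.ne'
  have hIcc : (#(Icc 0 K) : ℤ) = K + 1 := by
    rw [Int.card_Icc_of_le _ _ (by omega)]; ring
  calc (#s : ℝ) ≤ #(Icc 0 K) := by exact_mod_cast hcard
    _ = K + 1 := by exact_mod_cast hIcc
    _ ≤ (b - a) / q + 1 := by linarith

theorem Int.card_piFinset_Icc_floor_le (k : ℕ) {B : ℝ} (hB : 0 ≤ B) :
    (#(Fintype.piFinset fun _ : Fin k => Icc (-⌊B⌋) ⌊B⌋) : ℝ) ≤ (2 * B + 1) ^ k := by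
  have hm : 0 ≤ ⌊B⌋ := Int.floor_nonneg.mpr hB
  have hIcc : (#(Icc (-⌊B⌋) ⌊B⌋) : ℤ) = 2 * ⌊B⌋ + 1 := by
    rw [Int.card_Icc_of_le _ _ (by omega)]; ring
  rw [Fintype.card_piFinset_const, Nat.cast_pow,
    show (#(Icc (-⌊B⌋) ⌊B⌋) : ℝ) = 2 * ⌊B⌋ + 1 by exact_mod_cast hIcc]
  gcongr
  exact Int.floor_le B

theorem Int.mem_Icc_floor_of_abs_le {z : ℤ} {B : ℝ} (h : |(z : ℝ)| ≤ B) :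
    z ∈ Icc (-⌊B⌋) ⌊B⌋ := by
  rw [abs_le] at h
  rw [mem_Icc, neg_le, Int.le_floor, Int.le_floor]
  push_cast
  constructor <;> linarith

namespace Polynomial

theorem sq_dvd_sub_of_sq_dvd_eval_sub {R : Type*} [CommRing R] [IsDomain R] {p : R}
    (hp : Prime p) (g : R[X]) {t u : R} (htu : p ∣ u - t) (hg : p ^ 2 ∣ g.eval u - g.eval t)
    (hg' : ¬ p ∣ g.derivative.eval t) : p ^ 2 ∣ u - t := by
  obtain ⟨w, hw⟩ := htu
  obtain rfl : u = t + p * w := by rw [← hw, add_sub_cancel]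
  obtain ⟨k, hk⟩ := g.binomExpansion t (p * w)
  have : p * p ∣ p * (g.derivative.eval t * w) := by
    have : p * (g.derivative.eval t * w) =
        g.eval (t + p * w) - g.eval t - p ^ 2 * (k * w ^ 2) := by
      linear_combination -hk
    exact pow_two p ▸ this ▸ dvd_sub hg (dvd_mul_right _ _)
  have := (hp.dvd_or_dvd ((mul_dvd_mul_iff_left hp.ne_zero).mp this)).resolve_left hg'
  rw [add_sub_cancel_left, pow_two]
  exact mul_dvd_mul_left p this

theorem card_image_le_natDegree {R K : Type*} [CommRing R] [CommRing K] [IsDomain K]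
    [DecidableEq K] (π : R →+* K) {g : R[X]} (hg : g.map π ≠ 0) {s : Finset R}
    (hs : ∀ t ∈ s, π (g.eval t) = 0) : #(s.image π) ≤ g.natDegree := by
  refine (card_le_degree_of_subset_roots (p := g.map π) fun r hr => ?_).trans natDegree_map_le
  obtain ⟨t, ht, rfl⟩ := mem_image.mp hr
  rw [mem_roots hg, IsRoot, eval_map, eval₂_at_apply]
  exact hs t ht

theorem card_filter_sq_dvd_eval_le {p : ℕ} (hp : p.Prime) (g : ℤ[X]) {a b : ℤ} (hab : a ≤ b) :
    (#{t ∈ Icc a b | (p : ℤ) ^ 2 ∣ g.eval t ∧ ¬ (p : ℤ) ∣ g.derivative.eval t} : ℝ) ≤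
      g.natDegree * ((b - a) / (p : ℝ) ^ 2 + 1) := by
  set A := {t ∈ Icc a b | (p : ℤ) ^ 2 ∣ g.eval t ∧ ¬ (p : ℤ) ∣ g.derivative.eval t}
  have hpos : 0 ≤ ((b : ℝ) - a) / (p : ℝ) ^ 2 + 1 := by
    have : (a : ℝ) ≤ b := by exact_mod_cast hab
    positivity
  rcases A.eq_empty_or_nonempty with hA | ⟨t₀, ht₀⟩
  · rw [hA, card_empty, Nat.cast_zero]
    exact mul_nonneg (Nat.cast_nonneg _) hpos
  have hmem {t} (ht : t ∈ A) := mem_filter.mp ht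
  have := Fact.mk hp
  let π := Int.castRingHom (ZMod p)
  have hπ (z : ℤ) : π z = 0 ↔ (p : ℤ) ∣ z := ZMod.intCast_zmod_eq_zero_iff_dvd z p
  have hfiber (r : ZMod p) : (#{t ∈ A | π t = r} : ℝ) ≤ (b - a) / (p : ℝ) ^ 2 + 1 := by
    have := Int.card_le_of_forall_dvd_sub (q := (p : ℤ) ^ 2) (s := {t ∈ A | π t = r})
      (by have := hp.pos; positivity) hab ((filter_subset _ _).trans (filter_subset _ _))
      fun t ht u hu => by
        obtain ⟨htA, rfl⟩ := mem_filter.mp ht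
        obtain ⟨huA, hut⟩ := mem_filter.mp hu
        refine sq_dvd_sub_of_sq_dvd_eval_sub (Nat.prime_iff_prime_int.mp hp) g
          ((ZMod.intCast_eq_intCast_iff_dvd_sub u t p).mp hut) ?_ (hmem huA).2.2
        exact dvd_sub (hmem htA).2.1 (hmem huA).2.1
    exact_mod_cast this
  have hroots : #(A.image π) ≤ g.natDegree := by
    refine card_image_le_natDegree π (fun hg => (hmem ht₀).2.2 ?_) fun t ht => ?_
    · rw [← hπ, ← eval₂_at_apply, ← eval_map, ← derivative_map, hg, derivative_zero, eval_zero]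
    · exact (hπ _).mpr ((dvd_pow_self _ two_ne_zero).trans (hmem ht).2.1)
  calc (#A : ℝ) = ∑ r ∈ A.image π, (#{t ∈ A | π t = r} : ℝ) := by
        exact_mod_cast card_eq_sum_card_image π A
    _ ≤ #(A.image π) * ((b - a) / (p : ℝ) ^ 2 + 1) :=
        (sum_le_card_nsmul _ _ _ fun r _ => hfiber r).trans_eq (nsmul_eq_mul _ _)
    _ ≤ g.natDegree * ((b - a) / (p : ℝ) ^ 2 + 1) := by gcongr

theorem card_filter_sq_dvd_eval_Icc_floor_le {p : ℕ} (hp : p.Prime) (g : ℤ[X]) {B : ℝ}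
    (hB : 0 ≤ B) :
    (#{t ∈ Icc (-⌊B⌋) ⌊B⌋ | (p : ℤ) ^ 2 ∣ g.eval t ∧ ¬ (p : ℤ) ∣ g.derivative.eval t} : ℝ) ≤
      g.natDegree * (2 * B / (p : ℝ) ^ 2 + 1) := by
  have hm : 0 ≤ ⌊B⌋ := Int.floor_nonneg.mpr hB
  have hm' : (0 : ℝ) ≤ ⌊B⌋ := by exact_mod_cast hm
  have hw₀ : (0 : ℝ) ≤ (⌊B⌋ - (-⌊B⌋ : ℤ) : ℝ) := by push_cast; linarith
  have hw₁ : (⌊B⌋ - (-⌊B⌋ : ℤ) : ℝ) ≤ 2 * B := by push_cast; linarith [Int.floor_le B]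
  refine (card_filter_sq_dvd_eval_le hp g (by omega)).trans ?_
  gcongr

end Polynomial

theorem Set.ncard_le_sum_card_of_forall_cons {α : Type*} {k : ℕ} {S : Set (Fin (k + 1) → α)}
    {Y : Finset (Fin k → α)} {A : (Fin k → α) → Finset α}
    (hS : ∀ x ∈ S, Fin.tail x ∈ Y ∧ x 0 ∈ A (Fin.tail x)) :
    S.ncard ≤ ∑ y ∈ Y, #(A y) := by
  classical
  calc S.ncard ≤ #((Y.sigma A).image fun z => (Fin.cons z.2 z.1 : Fin (k + 1) → α)) := by
        rw [← Set.ncard_coe_finset]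
        refine Set.ncard_le_ncard fun x hx => ?_
        simp only [coe_image, coe_sigma, Set.mem_image, Set.mem_sigma_iff, mem_coe]
        exact ⟨⟨Fin.tail x, x 0⟩, hS x hx, Fin.cons_self_tail x⟩
    _ ≤ #(Y.sigma A) := card_image_le
    _ = ∑ y ∈ Y, #(A y) := card_sigma Y A

end

namespace MvPolynomial

variable {R : Type*} [CommSemiring R] {k : ℕ}

theorem finSuccEquiv_pderiv_zero (f : MvPolynomial (Fin (k + 1)) R) :
    finSuccEquiv R k (pderiv 0 f) = Polynomial.derivative (finSuccEquiv R k f) := by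
  induction f using MvPolynomial.induction_on with
  | C a => simp [finSuccEquiv_apply]
  | add f g hf hg => simp only [map_add, hf, hg]
  | mul_X f j hf =>
    have hX : finSuccEquiv R k (pderiv 0 (X j)) =
        Polynomial.derivative (finSuccEquiv R k (X j)) := by
      cases j using Fin.cases with
      | zero => simp [finSuccEquiv_X_zero]
      | succ i => simp [finSuccEquiv_X_succ, pderiv_X_of_ne (Fin.succ_ne_zero i)]
    simp only [Derivation.leibniz, map_add, map_mul, smul_eq_mul, hf, hX,
      Polynomial.derivative_mul]
    ring

theorem eval_eq_eval_finSuccEquiv (x : Fin (k + 1) → R) (f : MvPolynomial (Fin (k + 1)) R) :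
    eval x f = ((finSuccEquiv R k f).map (eval (Fin.tail x))).eval (x 0) := by
  conv_lhs => rw [← Fin.cons_self_tail x, eval_eq_eval_mv_eval']

theorem eval_pderiv_zero_eq_eval_derivative_finSuccEquiv (x : Fin (k + 1) → R)
    (f : MvPolynomial (Fin (k + 1)) R) :
    eval x (pderiv 0 f) =
      (Polynomial.derivative ((finSuccEquiv R k f).map (eval (Fin.tail x)))).eval (x 0) := by
  rw [eval_eq_eval_finSuccEquiv, finSuccEquiv_pderiv_zero, Polynomial.derivative_map]

end MvPolynomial

theorem dagger_count_bound (n d : ℕ) (hn : 1 ≤ n)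
    (F : MvPolynomial (Fin n) ℤ)
    (hdeg : F.degreeOf ⟨0, by omega⟩ ≤ d)
    (p : ℕ) (hp : p.Prime) (B : ℝ) (hB : 1 ≤ B) :
    (Set.ncard {x : Fin n → ℤ | (∀ i, |(x i : ℝ)| ≤ B) ∧
        (p : ℤ) ^ 2 ∣ eval x F ∧
        ¬ ((p : ℤ) ∣ eval x (pderiv (⟨0, by omega⟩ : Fin n) F))} : ℝ) ≤
      d * (2 * B + 1) ^ (n - 1) * (2 * B / (p : ℝ) ^ 2 + 1) := by
  obtain ⟨k, rfl⟩ : ∃ k, n = k + 1 := ⟨n - 1, by omega⟩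
  change F.degreeOf 0 ≤ d at hdeg
  change (Set.ncard {x : Fin (k + 1) → ℤ | _ ∧ _ ∧ ¬ (p : ℤ) ∣ eval x (pderiv 0 F)} : ℝ) ≤ _
  have hB₀ : 0 ≤ B := by linarith
  let g (y : Fin k → ℤ) : Polynomial ℤ := (finSuccEquiv ℤ k F).map (eval y)
  have hg (y) : (g y).natDegree ≤ d :=
    Polynomial.natDegree_map_le.trans ((natDegree_finSuccEquiv F).trans_le hdeg)
  refine (Nat.cast_le.mpr (Set.ncard_le_sum_card_of_forall_cons
    (Y := Fintype.piFinset fun _ : Fin k => Finset.Icc (-⌊B⌋) ⌊B⌋)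
    (A := fun y => {t ∈ Finset.Icc (-⌊B⌋) ⌊B⌋ |
      (p : ℤ) ^ 2 ∣ (g y).eval t ∧ ¬ (p : ℤ) ∣ (g y).derivative.eval t}) ?_)).trans ?_
  · rintro x ⟨hbox, hF, hF'⟩
    rw [eval_eq_eval_finSuccEquiv] at hF
    rw [eval_pderiv_zero_eq_eval_derivative_finSuccEquiv] at hF'
    exact ⟨Fintype.mem_piFinset.mpr fun i => Int.mem_Icc_floor_of_abs_le (hbox _),
      Finset.mem_filter.mpr ⟨Int.mem_Icc_floor_of_abs_le (hbox 0), hF, hF'⟩⟩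
  rw [Nat.cast_sum, Nat.add_sub_cancel]
  calc _ ≤ _ • ((d : ℝ) * (2 * B / (p : ℝ) ^ 2 + 1)) := Finset.sum_le_card_nsmul _ _ _
        fun y _ => (Polynomial.card_filter_sq_dvd_eval_Icc_floor_le hp (g y) hB₀).trans
          (by gcongr; exact hg y)
    _ ≤ (2 * B + 1) ^ k * (d * (2 * B / (p : ℝ) ^ 2 + 1)) := by
        rw [nsmul_eq_mul]
        gcongr
        exact Int.card_piFinset_Icc_floor_le k hB₀
    _ = d * (2 * B + 1) ^ k * (2 * B / (p : ℝ) ^ 2 + 1) := by ring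
end
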